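/- arXiv:1412.1871 — 5 statements merged into one kernel-verified Lean document; each statement's English description precedes it below -/
import Mathlib

section
/- Let k be a field and (P, ⪯) a totally ordered set. For intervals I and J of P, there exists a nonzero morphism of persistence modules from the interval module k_I to the interval module k_J if and only if I has good intersection with J; and in that case every morphism k_I → k_J is a scalar multiple of the morphism φ_{I,J} defined by φ_{I,J}(p) = id_k for p ∈ I ∩ J and φ_{I,J}(p) = 0 otherwise (so the space of morphisms k_I → k_J is one-dimensional). -/
/-!
At each `p` a morphism `f : k_I → k_J` is multiplication by a scalar `c p`, which vanishes
off `I ∩ J`. Naturality along `p' ≤ p` with `p ∈ I` reads `c p' = [p' ∈ J] • c p`. Hence `c`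
is constant on `I ∩ J`; and if it is nonzero, it cannot drop to zero going up inside `I` (so
every point of `I` lies below a point of `J`) nor going down inside `J` (so every point of `J`
lies above a point of `I`): this is good intersection. Conversely, under good intersection the
indicator of `I ∩ J` obeys the same rule, so `φ_{I,J}` is a morphism.
-/

set_option linter.unusedSectionVars false

open Classical

universe u v w w'

section Persistence

variable (k : Type u) [Field k] (P : Type v) [LinearOrder P]

/-- A persistence module over the poset `P`: a functor assigning to each `p : P` a
`k`-vector space and to each pair `p ⪰ p'` a linear map `M p → M p'`. -/
structure PersistenceModule where
  carrier : P → Type w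
  [acg : ∀ p, AddCommGroup (carrier p)]
  [mod : ∀ p, Module k (carrier p)]
  map : ∀ {p p' : P}, p' ≤ p → (carrier p →ₗ[k] carrier p')
  map_id : ∀ p : P, map (le_refl p) = LinearMap.id
  map_comp : ∀ {p p' p'' : P} (h1 : p'' ≤ p') (h2 : p' ≤ p),
      (map h1).comp (map h2) = map (h1.trans h2)

attribute [instance] PersistenceModule.acg PersistenceModule.mod

variable {k P}

/-- A morphism of persistence modules. -/
structure PersistenceHom (M : PersistenceModule.{u,v,w} k P)
    (N : PersistenceModule.{u,v,w'} k P) where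
  f : ∀ p : P, M.carrier p →ₗ[k] N.carrier p
  comm : ∀ {p p' : P} (h : p' ≤ p), (N.map h).comp (f p) = (f p').comp (M.map h)

/-- An isomorphism of persistence modules. -/
structure PersistenceIso (M : PersistenceModule.{u,v,w} k P)
    (N : PersistenceModule.{u,v,w'} k P) where
  e : ∀ p : P, M.carrier p ≃ₗ[k] N.carrier p
  comm : ∀ {p p' : P} (h : p' ≤ p) (x : M.carrier p), e p' (M.map h x) = N.map h (e p x)

variable (P)

/-- An interval of `P`: a nonempty convex subset. -/
def IsInterval (I : Set P) : Prop :=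
  I.Nonempty ∧ ∀ ⦃a b c : P⦄, a ∈ I → c ∈ I → a ≤ b → b ≤ c → b ∈ I

variable (k)

/-- The fibre of the interval module `k_I` at `p`: a copy of `k` if `p ∈ I`, zero otherwise. -/
noncomputable def intervalCarrier (I : Set P) (p : P) : Submodule k k :=
  if p ∈ I then ⊤ else ⊥

theorem intervalCarrier_eq_zero {I : Set P} {p : P} (hp : p ∉ I)
    (x : intervalCarrier k P I p) : (x : k) = 0 := by
  have hx := x.2
  simp only [intervalCarrier, if_neg hp, Submodule.mem_bot] at hx
  exact hx

/-- The structure maps of the interval module. -/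
noncomputable def intervalMapAux (I : Set P) (p p' : P) :
    intervalCarrier k P I p →ₗ[k] intervalCarrier k P I p' where
  toFun x := ⟨if p' ∈ I then (x : k) else 0, by
    split_ifs with h
    · simp [intervalCarrier, h]
    · exact (intervalCarrier k P I p').zero_mem⟩
  map_add' x y := by
    apply Subtype.ext
    by_cases h : p' ∈ I <;> simp [h]
  map_smul' c x := by
    apply Subtype.ext
    by_cases h : p' ∈ I <;> simp [h]

/-- The interval module `k_I` associated to an interval `I ⊆ P`. -/
noncomputable def intervalModule (I : Set P) (hI : IsInterval P I) :
    PersistenceModule.{u,v,u} k P where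
  carrier p := intervalCarrier k P I p
  map {p p'} _ := intervalMapAux k P I p p'
  map_id p := by
    ext x
    by_cases h : p ∈ I
    · simp [intervalMapAux, h]
    · have hx := intervalCarrier_eq_zero k P h x
      simp [intervalMapAux, h, hx]
  map_comp {p p' p''} h1 h2 := by
    ext x
    by_cases h'' : p'' ∈ I
    · by_cases h' : p' ∈ I
      · simp [intervalMapAux, h', h'']
      · have hp : p ∉ I := fun hp => h' (hI.2 h'' hp h1 h2)
        have hx := intervalCarrier_eq_zero k P hp x
        simp [intervalMapAux, h', h'', hx]
    · simp [intervalMapAux, h'']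

/-- The pointwise direct sum of a family of persistence modules. -/
noncomputable def directSumPM {A : Type w'} (Ms : A → PersistenceModule.{u,v,w} k P) :
    PersistenceModule k P where
  carrier p := Π₀ a, (Ms a).carrier p
  map h := DFinsupp.mapRange.linearMap (fun a => (Ms a).map h)
  map_id p := by
    try dsimp only
    have h : (fun a => (Ms a).map (le_refl p)) = fun a => LinearMap.id := by
      funext a; exact (Ms a).map_id p
    rw [h, DFinsupp.mapRange.linearMap_id]
  map_comp h1 h2 := by
    try dsimp only
    rw [← DFinsupp.mapRange.linearMap_comp]
    congr 1
    funext a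
    exact (Ms a).map_comp h1 h2

end Persistence

section Statement0

variable (k : Type u) [Field k] (P : Type v) [LinearOrder P]

/-- `I` has good intersection with `J`. -/
def GoodIntersection (I J : Set P) : Prop :=
  (I ∩ J).Nonempty ∧ (∀ p ∈ I, ∃ p' ∈ J, p ≤ p') ∧ (∀ p' ∈ J, ∃ p ∈ I, p ≤ p')

/-- The canonical family of linear maps `φ_{I,J}` : identity of `k` on `I ∩ J`, zero elsewhere. -/
noncomputable def phiAux (I J : Set P) (p : P) :
    intervalCarrier k P I p →ₗ[k] intervalCarrier k P J p where
  toFun x := ⟨if p ∈ I ∩ J then (x : k) else 0, by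
    split_ifs with h
    · simp [intervalCarrier, h.2]
    · exact (intervalCarrier k P J p).zero_mem⟩
  map_add' x y := by
    apply Subtype.ext
    by_cases h : p ∈ I ∩ J <;> simp [h]
  map_smul' c x := by
    apply Subtype.ext
    by_cases h : p ∈ I ∩ J <;> simp [h]

theorem one_mem_intervalCarrier {I : Set P} {p : P} (hp : p ∈ I) :
    (1 : k) ∈ intervalCarrier k P I p := by
  simp [intervalCarrier, hp]

variable {k P}

theorem Submodule.coe_linearMap_apply_eq_mul {R : Type*} [CommSemiring R] {S T : Submodule R R}
    (g : S →ₗ[R] T) (h1 : (1 : R) ∈ S) (x : S) : (g x : R) = x * g ⟨1, h1⟩ := by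
  have hx : x = (x : R) • ⟨1, h1⟩ := Subtype.ext (by simp)
  conv_lhs => rw [hx, map_smul]
  rfl

@[simp]
theorem intervalModule_map_coe {I : Set P} (hI : IsInterval P I) {p p' : P} (h : p' ≤ p)
    (x : (intervalModule k P I hI).carrier p) :
    Subtype.val ((intervalModule k P I hI).map h x) = if p' ∈ I then Subtype.val x else 0 :=
  rfl

@[simp]
theorem phiAux_coe {I : Set P} (hI : IsInterval P I) (J : Set P) (p : P)
    (x : (intervalModule k P I hI).carrier p) :
    Subtype.val (phiAux k P I J p x) = if p ∈ I ∩ J then Subtype.val x else 0 :=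
  rfl

theorem phiAux_ne_zero {I J : Set P} {p : P} (hp : p ∈ I ∩ J) : phiAux k P I J p ≠ 0 := by
  intro h
  have h1 : (if p ∈ I ∩ J then (1 : k) else 0) = 0 :=
    congrArg (fun φ => Subtype.val (φ ⟨1, one_mem_intervalCarrier k P hp.1⟩)) h
  exact one_ne_zero (by rwa [if_pos hp] at h1)

theorem GoodIntersection.mem_and_mem_iff {I J : Set P} (hI : IsInterval P I)
    (hJ : IsInterval P J) (hIJ : GoodIntersection P I J) {p p' : P} (hp : p ∈ I) (h : p' ≤ p) :
    p' ∈ J ∧ p ∈ J ↔ p' ∈ I ∧ p' ∈ J := by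
  constructor
  · rintro ⟨hp'J, -⟩
    obtain ⟨q, hqI, hqp'⟩ := hIJ.2.2 p' hp'J
    exact ⟨hI.2 hqI hp hqp' h, hp'J⟩
  · rintro ⟨-, hp'J⟩
    obtain ⟨q, hqJ, hpq⟩ := hIJ.2.1 p hp
    exact ⟨hp'J, hJ.2 hp'J hqJ h hpq⟩

namespace PersistenceHom

variable {I J : Set P} {hI : IsInterval P I} {hJ : IsInterval P J}
  (g : PersistenceHom (intervalModule k P I hI) (intervalModule k P J hJ))

noncomputable def scalar (p : P) : k :=
  if hp : p ∈ I then Subtype.val (g.f p ⟨1, one_mem_intervalCarrier k P hp⟩) else 0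

theorem coe_apply (p : P) (x : (intervalModule k P I hI).carrier p) :
    Subtype.val (g.f p x) = g.scalar p * Subtype.val x := by
  unfold scalar
  split_ifs with hp
  · exact (Submodule.coe_linearMap_apply_eq_mul (g.f p) _ x).trans (mul_comm _ _)
  · have hx : x = 0 := Subtype.ext (intervalCarrier_eq_zero k P hp x)
    rw [hx, map_zero]
    exact (zero_mul _).symm

theorem scalar_eq_zero_of_notMem {p : P} (hp : p ∉ I ∩ J) : g.scalar p = 0 := by
  by_cases hpI : p ∈ I
  · have hpJ : p ∉ J := fun hpJ => hp ⟨hpI, hpJ⟩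
    simp only [scalar, dif_pos hpI]
    exact intervalCarrier_eq_zero k P hpJ _
  · simp [scalar, hpI]

theorem mem_of_scalar_ne_zero {p : P} (hp : g.scalar p ≠ 0) : p ∈ I ∩ J := by
  by_contra h
  exact hp (g.scalar_eq_zero_of_notMem h)

theorem scalar_ne_zero_of_ne_zero {p : P} (hp : g.f p ≠ 0) : g.scalar p ≠ 0 := by
  intro h
  exact hp (LinearMap.ext fun x => Subtype.ext (by rw [coe_apply, h, zero_mul]; rfl))

theorem scalar_of_le {p p' : P} (hp : p ∈ I) (h : p' ≤ p) :
    g.scalar p' = if p' ∈ J then g.scalar p else 0 := by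
  let one : (intervalModule k P I hI).carrier p := ⟨1, one_mem_intervalCarrier k P hp⟩
  have hone : Subtype.val one = 1 := rfl
  have hcomm : Subtype.val ((intervalModule k P J hJ).map h (g.f p one)) =
      Subtype.val (g.f p' ((intervalModule k P I hI).map h one)) :=
    congrArg Subtype.val (LinearMap.congr_fun (g.comm h) one)
  rw [intervalModule_map_coe, coe_apply, coe_apply, intervalModule_map_coe] at hcomm
  by_cases hp'I : p' ∈ I
  · simpa [hp'I, hone] using hcomm.symm
  · rw [g.scalar_eq_zero_of_notMem fun hp' => hp'I hp'.1]
    simpa [hp'I, hone] using hcomm.symm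

theorem scalar_eq_of_mem_inter {p q : P} (hp : p ∈ I ∩ J) (hq : q ∈ I ∩ J) :
    g.scalar p = g.scalar q := by
  rcases le_total p q with h | h
  · simp [g.scalar_of_le hq.1 h, hp.2]
  · simp [g.scalar_of_le hp.1 h, hq.2]

theorem eq_smul_phiAux {p₀ : P} (hp₀ : p₀ ∈ I ∩ J) (p : P) :
    g.f p = g.scalar p₀ • phiAux k P I J p := by
  refine LinearMap.ext fun x => Subtype.ext ?_
  change Subtype.val (g.f p x) = g.scalar p₀ * Subtype.val (phiAux k P I J p x)
  rw [coe_apply, phiAux_coe]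
  by_cases hp : p ∈ I ∩ J
  · rw [if_pos hp, g.scalar_eq_of_mem_inter hp hp₀]
  · rw [if_neg hp, g.scalar_eq_zero_of_notMem hp, zero_mul, mul_zero]

theorem goodIntersection_of_scalar_ne_zero {p : P} (hp : g.scalar p ≠ 0) :
    GoodIntersection P I J := by
  have hpIJ := g.mem_of_scalar_ne_zero hp
  refine ⟨⟨p, hpIJ⟩, fun q hqI => ?_, fun q hqJ => ?_⟩
  · rcases le_total q p with h | h
    · exact ⟨p, hpIJ.2, h⟩
    · have hq : g.scalar q ≠ 0 := by
        rwa [g.scalar_of_le hqI h, if_pos hpIJ.2] at hp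
      exact ⟨q, (g.mem_of_scalar_ne_zero hq).2, le_rfl⟩
  · rcases le_total p q with h | h
    · exact ⟨p, hpIJ.1, h⟩
    · have hq : g.scalar q ≠ 0 := by
        rwa [g.scalar_of_le hpIJ.1 h, if_pos hqJ]
      exact ⟨q, (g.mem_of_scalar_ne_zero hq).1, le_rfl⟩

end PersistenceHom

noncomputable def phiHom {I J : Set P} (hI : IsInterval P I) (hJ : IsInterval P J)
    (hIJ : GoodIntersection P I J) :
    PersistenceHom (intervalModule k P I hI) (intervalModule k P J hJ) where
  f := phiAux k P I J
  comm {p p'} h := by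
    refine LinearMap.ext fun x => Subtype.ext ?_
    change (if p' ∈ J then (if p ∈ I ∩ J then Subtype.val x else 0) else 0) =
      if p' ∈ I ∩ J then (if p' ∈ I then Subtype.val x else 0) else 0
    by_cases hp : p ∈ I
    · have key := hIJ.mem_and_mem_iff hI hJ hp h
      by_cases hp' : p' ∈ J <;> by_cases hpJ : p ∈ J <;> simp_all
    · simp [intervalCarrier_eq_zero k P hp x]

/-- there is a nonzero morphism of persistence modules `k_I → k_J` if and only if
`I` has good intersection with `J`; in that case `φ_{I,J}` is a morphism and every morphism
`k_I → k_J` is a scalar multiple of it (so the space of morphisms is one-dimensional). -/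
theorem statement0 (I J : Set P) (hI : IsInterval P I) (hJ : IsInterval P J) :
    ((∃ f : PersistenceHom (intervalModule k P I hI) (intervalModule k P J hJ),
        ∃ p : P, f.f p ≠ 0) ↔ GoodIntersection P I J) ∧
    (GoodIntersection P I J →
      ∃ Φ : PersistenceHom (intervalModule k P I hI) (intervalModule k P J hJ),
        (∀ p : P, Φ.f p = phiAux k P I J p) ∧ (∃ p : P, Φ.f p ≠ 0) ∧
        ∀ f : PersistenceHom (intervalModule k P I hI) (intervalModule k P J hJ),
          ∃ c : k, ∀ p : P, f.f p = c • Φ.f p) := by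
  have classification (hIJ : GoodIntersection P I J) :
      ∃ Φ : PersistenceHom (intervalModule k P I hI) (intervalModule k P J hJ),
        (∀ p : P, Φ.f p = phiAux k P I J p) ∧ (∃ p : P, Φ.f p ≠ 0) ∧
        ∀ f : PersistenceHom (intervalModule k P I hI) (intervalModule k P J hJ),
          ∃ c : k, ∀ p : P, f.f p = c • Φ.f p := by
    obtain ⟨p₀, hp₀⟩ := hIJ.1
    exact ⟨phiHom hI hJ hIJ, fun _ => rfl, ⟨p₀, phiAux_ne_zero hp₀⟩,
      fun f => ⟨f.scalar p₀, f.eq_smul_phiAux hp₀⟩⟩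
  refine ⟨⟨fun ⟨f, p, hfp⟩ =>
    f.goodIntersection_of_scalar_ne_zero (f.scalar_ne_zero_of_ne_zero hfp), fun hIJ => ?_⟩,
    classification⟩
  obtain ⟨Φ, -, hΦ, -⟩ := classification hIJ
  exact ⟨Φ, hΦ⟩

end Statement0
end

section
/- Let k be a field, P = {q_1 ≺ q_2 ≺ … ≺ q_m} a finite totally ordered set, and M a pointwise finite-dimensional persistence module over P. For p ⪰ p' in P let β_{p,p'} = dim_k Im(ω^{p'}_p : M(p) → M(p')), and adopt the convention β_{q,p'} = 0 whenever q is the formal successor of q_m (i.e. extend M by zero above q_m); for p ≺ q_m write p+1 for the immediate successor of p in P. Then for all p ≻ p' in P, the multiplicity of the interval module k_{(p',p]} in the interval decomposition of M, where (p',p] = {q ∈ P : p ⪰ q ≻ p'}, satisfies μ_{(p',p]}(M) = β_{p+1,p'} − β_{p,p'} + β_{p,p'+1} − β_{p+1,p'+1}. -/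
/-!
Under the decomposition `M ≅ ⊕ₐ k_{I a}`, the structure map `M(x) → M(y)` is the direct sum of
the maps of the `k_{I a}`, each of rank one if `x, y ∈ I a` and zero otherwise, so `β_{x,y}`
counts the intervals containing both `x` and `y`. For a single interval `J`, with `p' ⋖ q'` and
`p ⋖ p⁺`, convexity gives
`[J = (p', p]] = [p⁺, p' ∈ J] - [p, p' ∈ J] + [p, q' ∈ J] - [p⁺, q' ∈ J]`,
and summing over the finitely many intervals through `q'` yields the formula. Working in
`WithTop P` turns the formal successor of the maximum into an element lying in no interval.
-/

set_option linter.unusedSectionVars false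

open Classical

universe u v w w'

theorem DFinsupp.rank_range_mapRangeLinearMap {K : Type u} [DivisionRing K] {ι : Type v}
    {M N : ι → Type w} [∀ i, AddCommGroup (M i)] [∀ i, Module K (M i)]
    [∀ i, AddCommGroup (N i)] [∀ i, Module K (N i)] (f : ∀ i, M i →ₗ[K] N i) :
    Module.rank K (LinearMap.range (DFinsupp.mapRange.linearMap f)) =
      Cardinal.sum fun i => Module.rank K (LinearMap.range (f i)) := by
  have hsurj : Function.Surjective
      (DFinsupp.mapRange.linearMap fun i => (f i).rangeRestrict) :=
    (DirectSum.lmap_surjective _).2 fun i => (f i).surjective_rangeRestrict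
  have hinj : Function.Injective
      (DFinsupp.mapRange.linearMap fun i => (LinearMap.range (f i)).subtype) :=
    (DirectSum.lmap_injective _).2 fun i => (LinearMap.range (f i)).injective_subtype
  calc Module.rank K (LinearMap.range (DFinsupp.mapRange.linearMap f))
      = Module.rank K (LinearMap.range
          (DFinsupp.mapRange.linearMap fun i => (LinearMap.range (f i)).subtype)) := by
        rw [← LinearMap.range_comp_of_range_eq_top _ (LinearMap.range_eq_top.2 hsurj),
          ← DFinsupp.mapRange.linearMap_comp]
        rfl
    _ = Module.rank K (DirectSum ι fun i => LinearMap.range (f i)) :=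
        rank_range_of_injective _ hinj
    _ = _ := rank_directSum K _

theorem Cardinal.sum_ite_one_zero {A : Type w'} (Q : A → Prop) [DecidablePred Q] :
    (Cardinal.sum fun a => if Q a then (1 : Cardinal.{u}) else 0) =
      Cardinal.lift.{u} (Cardinal.mk {a // Q a}) := by
  have hfib : ∀ a,
      (if Q a then (1 : Cardinal.{u}) else 0) = Cardinal.mk {_x : PUnit.{u+1} // Q a} := by
    intro a
    split_ifs with h <;> simp [h]
  simp_rw [hfib, ← Cardinal.mk_sigma, ← Cardinal.mk_uLift]
  exact Cardinal.mk_congr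
    ⟨fun x => ⟨x.1, x.2.2⟩, fun x => ⟨x.down.1, PUnit.unit, x.down.2⟩, fun _ => rfl, fun _ => rfl⟩

theorem Set.OrdConnected.eq_Ioc_iff_of_covBy {Q : Type*} [LinearOrder Q] {J : Set Q}
    (hJ : J.OrdConnected) {a a' b b' : Q} (ha : a ⋖ a') (hb : b ⋖ b') (hab : a < b) :
    J = Set.Ioc a b ↔ a' ∈ J ∧ b ∈ J ∧ a ∉ J ∧ b' ∉ J := by
  constructor
  · rintro rfl
    simp [ha.lt, ha.ge_of_gt hab, hab, hb.lt]
  · rintro ⟨ha', hbJ, haJ, hb'J⟩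
    ext x
    refine ⟨fun hx => ⟨?_, ?_⟩, fun hx => hJ.out ha' hbJ ⟨ha.ge_of_gt hx.1, hx.2⟩⟩
    · by_contra! hxa
      exact haJ (hJ.out hx ha' ⟨hxa, ha.lt.le⟩)
    · by_contra! hbx
      exact hb'J (hJ.out hbJ hx ⟨hb.lt.le, hb.ge_of_gt hbx⟩)

theorem Set.OrdConnected.ite_eq_Ioc {Q : Type*} [LinearOrder Q] {J : Set Q}
    (hJ : J.OrdConnected) {a a' b b' : Q} (ha : a ⋖ a') (hb : b ⋖ b') (hab : a < b) :
    (if J = Set.Ioc a b then 1 else 0 : ℤ) =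
      (if b' ∈ J ∧ a ∈ J then 1 else 0) - (if b ∈ J ∧ a ∈ J then 1 else 0)
        + (if b ∈ J ∧ a' ∈ J then 1 else 0) - (if b' ∈ J ∧ a' ∈ J then 1 else 0) := by
  have ha'b : a' ≤ b := ha.ge_of_gt hab
  have hb_of_a'_b' : a' ∈ J → b' ∈ J → b ∈ J := fun h h' => hJ.out h h' ⟨ha'b, hb.lt.le⟩
  have ha'_of_a_b : a ∈ J → b ∈ J → a' ∈ J := fun h h' => hJ.out h h' ⟨ha.lt.le, ha'b⟩
  have hb_of_a_b' : a ∈ J → b' ∈ J → b ∈ J := fun h h' => hJ.out h h' ⟨hab.le, hb.lt.le⟩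
  simp only [hJ.eq_Ioc_iff_of_covBy ha hb hab]
  by_cases h1 : a ∈ J <;> by_cases h2 : a' ∈ J <;> by_cases h3 : b ∈ J <;>
    by_cases h4 : b' ∈ J <;> simp_all

theorem natCard_eq_Ioc_of_covBy {A Q : Type*} [LinearOrder Q] {J : A → Set Q}
    (hJ : ∀ i, (J i).OrdConnected) {a a' b b' : Q} (ha : a ⋖ a') (hb : b ⋖ b') (hab : a < b)
    (hfin : {i | a' ∈ J i}.Finite) :
    (Nat.card {i // J i = Set.Ioc a b} : ℤ) =
      Nat.card {i // b' ∈ J i ∧ a ∈ J i} - Nat.card {i // b ∈ J i ∧ a ∈ J i}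
        + Nat.card {i // b ∈ J i ∧ a' ∈ J i} - Nat.card {i // b' ∈ J i ∧ a' ∈ J i} := by
  have hcard_eq_sum : ∀ R : A → Prop, (∀ i, R i → a' ∈ J i) →
      (Nat.card {i // R i} : ℤ) = ∑ i ∈ hfin.toFinset, if R i then 1 else 0 := by
    intro R hR
    rw [Finset.sum_boole, ← Nat.card_eq_finsetCard]
    exact congrArg _ (Nat.card_congr (Equiv.subtypeEquivRight fun i => by
      simp only [Finset.mem_filter, Set.Finite.mem_toFinset]
      exact ⟨fun h => ⟨hR i h, h⟩, And.right⟩))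
  have ha'b : a' ≤ b := ha.ge_of_gt hab
  rw [hcard_eq_sum (fun i => J i = Set.Ioc a b) fun i h => h ▸ ⟨ha.lt, ha'b⟩,
    hcard_eq_sum (fun i => b' ∈ J i ∧ a ∈ J i) fun i h =>
      (hJ i).out h.2 h.1 ⟨ha.lt.le, ha'b.trans hb.lt.le⟩,
    hcard_eq_sum (fun i => b ∈ J i ∧ a ∈ J i) fun i h => (hJ i).out h.2 h.1 ⟨ha.lt.le, ha'b⟩,
    hcard_eq_sum (fun i => b ∈ J i ∧ a' ∈ J i) fun i h => h.2,
    hcard_eq_sum (fun i => b' ∈ J i ∧ a' ∈ J i) fun i h => h.2,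
    ← Finset.sum_sub_distrib, ← Finset.sum_add_distrib, ← Finset.sum_sub_distrib]
  exact Finset.sum_congr rfl fun i _ => by convert (hJ i).ite_eq_Ioc ha hb hab

section IntervalModules

variable {k : Type u} [Field k] {P : Type v} [LinearOrder P]

theorem IsInterval.ordConnected_image_coe {I : Set P} (hI : IsInterval P I) :
    ((↑) '' I : Set (WithTop P)).OrdConnected := by
  refine ⟨?_⟩
  rintro _ ⟨x, hx, rfl⟩ _ ⟨y, hy, rfl⟩ z ⟨hxz, hzy⟩
  lift z to P using ne_top_of_le_ne_top WithTop.coe_ne_top hzy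
  exact ⟨z, hI.2 hx hy (WithTop.coe_le_coe.1 hxz) (WithTop.coe_le_coe.1 hzy), rfl⟩

theorem intervalMapAux_eq_zero {I : Set P} {x y : P} (h : ¬(x ∈ I ∧ y ∈ I)) :
    intervalMapAux k P I x y = 0 := by
  ext v
  by_cases hy : y ∈ I
  · have hx : x ∉ I := fun hx => h ⟨hx, hy⟩
    simp [intervalMapAux, intervalCarrier_eq_zero k P hx v]
  · simp [intervalMapAux, hy]

theorem rank_range_intervalMapAux (I : Set P) (x y : P) :
    Module.rank k (LinearMap.range (intervalMapAux k P I x y)) =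
      if x ∈ I ∧ y ∈ I then 1 else 0 := by
  split_ifs with h
  · have hsurj : Function.Surjective (intervalMapAux k P I x y) := fun v =>
      ⟨⟨v, by simp [intervalCarrier, h.1]⟩, Subtype.ext (by simp [intervalMapAux, h.2])⟩
    rw [LinearMap.range_eq_top.2 hsurj, rank_top,
      show intervalCarrier k P I y = ⊤ from if_pos h.2, rank_top, Module.rank_self]
  · rw [intervalMapAux_eq_zero h, LinearMap.range_zero, rank_bot]

theorem rank_range_map_directSumPM_intervalModule {A : Type w'} {I : A → Set P}
    (hI : ∀ a, IsInterval P (I a)) {x y : P} (h : y ≤ x) :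
    Module.rank k (LinearMap.range
        ((directSumPM k P fun a => intervalModule k P (I a) (hI a)).map h)) =
      Cardinal.lift.{u} (Cardinal.mk {a // x ∈ I a ∧ y ∈ I a}) := by
  have hsum := DFinsupp.rank_range_mapRangeLinearMap fun a => intervalMapAux k P (I a) x y
  simp only [rank_range_intervalMapAux] at hsum
  rw [← Cardinal.sum_ite_one_zero]
  exact hsum

theorem PersistenceIso.finrank_range_map {M : PersistenceModule.{u,v,w} k P}
    {N : PersistenceModule.{u,v,w'} k P} (e : PersistenceIso M N) {x y : P} (h : y ≤ x) :
    Module.finrank k (LinearMap.range (M.map h)) =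
      Module.finrank k (LinearMap.range (N.map h)) := by
  have hmap : (LinearMap.range (M.map h)).map (e.e y : M.carrier y →ₗ[k] N.carrier y) =
      LinearMap.range (N.map h) := by
    ext z
    constructor
    · rintro ⟨_, ⟨v, rfl⟩, rfl⟩
      exact ⟨e.e x v, (e.comm h v).symm⟩
    · rintro ⟨v, rfl⟩
      exact ⟨M.map h ((e.e x).symm v), ⟨_, rfl⟩, by simp [e.comm h]⟩
  rw [← LinearEquiv.finrank_map_eq (e.e y), hmap]

theorem PersistenceIso.finite_setOf_mem {M : PersistenceModule.{u,v,w} k P}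
    [∀ p, FiniteDimensional k (M.carrier p)] {A : Type w'} {I : A → Set P}
    {hI : ∀ a, IsInterval P (I a)}
    (e : PersistenceIso M (directSumPM k P fun a => intervalModule k P (I a) (hI a))) (y : P) :
    {a | y ∈ I a}.Finite := by
  have := Module.Finite.equiv (e.e y)
  have hrank := (rank_range_map_directSumPM_intervalModule hI (le_refl y)).symm.trans_lt
    ((rank_range_le _).trans_lt (Module.rank_lt_aleph0 k _))
  rw [Cardinal.lift_lt_aleph0, Cardinal.lt_aleph0_iff_finite] at hrank
  exact Set.finite_coe_iff.1
    (Finite.of_equiv {a // y ∈ I a ∧ y ∈ I a} (Equiv.subtypeEquivRight fun _ => and_self_iff))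

end IntervalModules

section Statement4

variable (k : Type u) [Field k] (P : Type v) [LinearOrder P]

/-- `β_{p,p'}`: the dimension of the image of the structure map `M(p) → M(p')` (for `p' ⪯ p`). -/
noncomputable def beta (M : PersistenceModule.{u,v,w} k P) (p p' : P) : ℕ :=
  if h : p' ≤ p then Module.finrank k (LinearMap.range (M.map h)) else 0

/-- `β` extended by the convention that it vanishes when the first index is the formal
successor `⊤` of the maximum of `P` (i.e. `M` is extended by zero above `P`). -/
noncomputable def betaT (M : PersistenceModule.{u,v,w} k P) (q : WithTop P) (p' : P) : ℕ :=
  WithTop.recTopCoe 0 (fun r => beta k P M r p') q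

theorem beta_eq_natCard {M : PersistenceModule.{u,v,w} k P} {A : Type w'} {I : A → Set P}
    {hI : ∀ a, IsInterval P (I a)}
    (e : PersistenceIso M (directSumPM k P fun a => intervalModule k P (I a) (hI a)))
    {x y : P} (h : y ≤ x) :
    beta k P M x y = Nat.card {a // x ∈ I a ∧ y ∈ I a} := by
  rw [beta, dif_pos h, e.finrank_range_map h, Module.finrank,
    rank_range_map_directSumPM_intervalModule hI h, Cardinal.toNat_lift]
  rfl

theorem betaT_eq_natCard_image {M : PersistenceModule.{u,v,w} k P} {A : Type w'}
    {I : A → Set P} {hI : ∀ a, IsInterval P (I a)}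
    (e : PersistenceIso M (directSumPM k P fun a => intervalModule k P (I a) (hI a)))
    {q : WithTop P} {y : P} (hy : (y : WithTop P) ≤ q) :
    betaT k P M q y =
      Nat.card {a // q ∈ ((↑) '' I a : Set (WithTop P)) ∧ y ∈ I a} := by
  induction q using WithTop.recTopCoe with
  | top => simp [betaT]
  | coe x =>
    simp only [WithTop.coe_injective.mem_set_image]
    exact beta_eq_natCard k P e (WithTop.coe_le_coe.1 hy)

theorem statement4
    (M : PersistenceModule.{u,v,w} k P)
    (hfd : ∀ p : P, FiniteDimensional k (M.carrier p))
    (p p' : P) (hpp' : p' < p)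
    (pS : WithTop P)
    (hpS : (pS = ⊤ ∧ ∀ r : P, r ≤ p) ∨
           (∃ q : P, pS = (q : WithTop P) ∧ p < q ∧ ∀ r : P, p < r → q ≤ r))
    (q' : P) (hq' : p' < q' ∧ ∀ r : P, p' < r → q' ≤ r)
    (A : Type w') (I : A → Set P) (hI : ∀ a, IsInterval P (I a))
    (iso : PersistenceIso M (directSumPM k P (fun a => intervalModule k P (I a) (hI a)))) :
    (Nat.card {a : A // I a = Set.Ioc p' p} : ℤ) =
      (betaT k P M pS p' : ℤ) - (beta k P M p p' : ℤ)
        + (beta k P M p q' : ℤ) - (betaT k P M pS q' : ℤ) := by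
  have hp : (p : WithTop P) ⋖ pS := by
    rcases hpS with ⟨rfl, hmax⟩ | ⟨q, rfl, hpq, hqmin⟩
    · exact WithTop.coe_covBy_top.2 fun r _ => hmax r
    · exact WithTop.coe_covBy_coe.2 ⟨hpq, fun r hpr hrq => (hqmin r hpr).not_gt hrq⟩
  have hp' : p' ⋖ q' := ⟨hq'.1, fun r hpr hrq => (hq'.2 r hpr).not_gt hrq⟩
  have hq'p : q' ≤ p := hp'.ge_of_gt hpp'
  have hfin : {a | (q' : WithTop P) ∈ ((↑) '' I a : Set (WithTop P))}.Finite := by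
    simpa only [WithTop.coe_injective.mem_set_image] using iso.finite_setOf_mem q'
  have hcount := natCard_eq_Ioc_of_covBy (fun a => (hI a).ordConnected_image_coe)
    (WithTop.coe_covBy_coe.2 hp') hp (WithTop.coe_lt_coe.2 hpp') hfin
  rw [betaT_eq_natCard_image k P iso ((WithTop.coe_le_coe.2 hpp'.le).trans hp.lt.le),
    betaT_eq_natCard_image k P iso ((WithTop.coe_le_coe.2 hq'p).trans hp.lt.le),
    beta_eq_natCard k P iso hpp'.le, beta_eq_natCard k P iso hq'p]
  simp only [WithTop.coe_injective.mem_set_image, ← WithTop.image_coe_Ioc,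
    (Set.image_injective.2 WithTop.coe_injective).eq_iff] at hcount
  exact hcount

end Statement4
end

section
/- Let k be a field, (P, ⪯) a totally ordered set, and {K_a}_{a∈A} a partition of P into pairwise disjoint intervals covering P. Let M be a pointwise finite-dimensional persistence module over P such that the structure map ω^{p'}_p : M(p) → M(p') is an isomorphism whenever p ⪰ p' lie in the same piece K_a. Then every interval I of P with nonzero multiplicity in the interval decomposition of M is a union of pieces K_a. -/
set_option linter.unusedSectionVars false

open Classical

universe u v w w'

/-! Transported along `iso`, the structure maps of the direct sum, and hence of every summand
`k_I`, are bijective inside each piece `K a`. A structure map of `k_I` from a point of `I` to a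
point outside `I`, or vice versa, goes between `k` and `0`, so it is never bijective. Hence every
piece lies in `I` or misses it, and since the pieces cover `P`, `I` is the union of those it meets. -/

section

variable {k : Type u} [Field k] {P : Type v} [LinearOrder P]

theorem PersistenceIso.bijective_map {M : PersistenceModule.{u,v,w} k P}
    {N : PersistenceModule.{u,v,w'} k P} (iso : PersistenceIso M N) {p p' : P} (h : p' ≤ p)
    (hM : Function.Bijective (M.map h)) : Function.Bijective (N.map h) := by
  have hN : ⇑(N.map h) = iso.e p' ∘ M.map h ∘ (iso.e p).symm := by
    funext y
    simp [iso.comm]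
  rw [hN]
  exact (iso.e p').bijective.comp (hM.comp (iso.e p).symm.bijective)

theorem directSumPM_bijective_map_summand {A : Type w'} (Ms : A → PersistenceModule.{u,v,w} k P)
    {p p' : P} (h : p' ≤ p) (hbij : Function.Bijective ((directSumPM k P Ms).map h)) (a : A) :
    Function.Bijective ((Ms a).map h) := by
  refine ⟨fun x y hxy => DFinsupp.single_injective (i := a) (hbij.1 ?_), fun y => ?_⟩
  · change DFinsupp.mapRange (fun b => (Ms b).map h) (fun b => map_zero _) (DFinsupp.single a x) =
      DFinsupp.mapRange (fun b => (Ms b).map h) (fun b => map_zero _) (DFinsupp.single a y)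
    rw [DFinsupp.mapRange_single, DFinsupp.mapRange_single, hxy]
  · obtain ⟨v, hv⟩ : ∃ v : Π₀ b, (Ms b).carrier p,
        DFinsupp.mapRange (fun b => (Ms b).map h) (fun b => map_zero _) v = DFinsupp.single a y :=
      hbij.2 _
    exact ⟨v a, (DFunLike.congr_fun hv a).trans DFinsupp.single_eq_same⟩

theorem intervalCarrier_subsingleton_iff {I : Set P} {p : P} :
    Subsingleton (intervalCarrier k P I p) ↔ p ∉ I := by
  rw [Submodule.subsingleton_iff_eq_bot]
  by_cases hp : p ∈ I
  · rw [intervalCarrier, if_pos hp]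
    exact iff_of_false top_ne_bot (not_not_intro hp)
  · rw [intervalCarrier, if_neg hp]
    exact iff_of_true rfl hp

theorem intervalModule_mem_iff_of_bijective {I : Set P} (hI : IsInterval P I) {p p' : P}
    (h : p' ≤ p) (hbij : Function.Bijective ((intervalModule k P I hI).map h)) :
    p ∈ I ↔ p' ∈ I := by
  have := (Equiv.ofBijective _ hbij).subsingleton_congr
  change Subsingleton (intervalCarrier k P I p) ↔ Subsingleton (intervalCarrier k P I p') at this
  rwa [intervalCarrier_subsingleton_iff, intervalCarrier_subsingleton_iff, not_iff_not] at this

end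

theorem exists_eq_biUnion_of_forall_mem_imp {α A : Type*} {K : A → Set α}
    (hcover : (⋃ a, K a) = Set.univ) {I : Set α}
    (hsat : ∀ a, ∀ p ∈ K a, ∀ p' ∈ K a, p ∈ I → p' ∈ I) :
    ∃ S : Set A, I = ⋃ a ∈ S, K a := by
  refine ⟨{a | (K a ∩ I).Nonempty}, Set.ext fun q => ⟨fun hq => ?_, fun hq => ?_⟩⟩
  · obtain ⟨a, ha⟩ := Set.mem_iUnion.1 (hcover ▸ Set.mem_univ q)
    exact Set.mem_biUnion ⟨q, ha, hq⟩ ha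
  · obtain ⟨a, ⟨p, hpK, hpI⟩, hqK⟩ := Set.mem_iUnion₂.1 hq
    exact hsat a p hpK q hqK hpI

theorem statement7_general (k : Type u) [Field k] (P : Type v) [LinearOrder P]
    {A : Type w'} (K : A → Set P)
    (hcover : (⋃ a, K a) = Set.univ)
    (M : PersistenceModule.{u,v,w} k P)
    (hiso : ∀ (a : A) (p p' : P), p ∈ K a → p' ∈ K a →
        ∀ h : p' ≤ p, Function.Bijective (M.map h))
    (B : Type w'') (I : B → Set P) (hI : ∀ b, IsInterval P (I b))
    (iso : PersistenceIso M (directSumPM k P (fun b => intervalModule k P (I b) (hI b)))) :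
    ∀ b : B, ∃ S : Set A, I b = ⋃ a ∈ S, K a := by
  intro b
  have hmem_iff : ∀ a, ∀ p ∈ K a, ∀ p' ∈ K a, p' ≤ p → (p ∈ I b ↔ p' ∈ I b) :=
    fun a p hp p' hp' h => intervalModule_mem_iff_of_bijective (hI b) h <|
      directSumPM_bijective_map_summand _ h (iso.bijective_map h (hiso a p p' hp hp' h)) b
  refine exists_eq_biUnion_of_forall_mem_imp hcover fun a p hp p' hp' hpI => ?_
  rcases le_total p' p with h | h
  · exact (hmem_iff a p hp p' hp' h).1 hpI
  · exact (hmem_iff a p' hp' p hp h).2 hpI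

/-- if `{K_a}` is a partition of `P` into pairwise disjoint intervals and `M` is a
pointwise finite-dimensional persistence module whose structure maps are isomorphisms inside
each piece `K_a`, then every interval occurring (with nonzero multiplicity) in the interval
decomposition of `M` is a union of pieces `K_a`. -/
theorem statement7 (k : Type u) [Field k] (P : Type v) [LinearOrder P]
    {A : Type w'} (K : A → Set P) (hK : ∀ a, IsInterval P (K a))
    (hdisj : ∀ a a' : A, a ≠ a' → Disjoint (K a) (K a'))
    (hcover : (⋃ a, K a) = Set.univ)
    (M : PersistenceModule.{u,v,w} k P)
    (hfd : ∀ p : P, FiniteDimensional k (M.carrier p))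
    (hiso : ∀ (a : A) (p p' : P), p ∈ K a → p' ∈ K a →
        ∀ h : p' ≤ p, Function.Bijective (M.map h))
    (B : Type w'') (I : B → Set P) (hI : ∀ b, IsInterval P (I b))
    (iso : PersistenceIso M (directSumPM k P (fun b => intervalModule k P (I b) (hI b)))) :
    ∀ b : B, ∃ S : Set A, I b = ⋃ a ∈ S, K a :=
  statement7_general k P K hcover M hiso B I hI iso
end

section
/- Let X be a set, * an element not in X, and d : (X ⊔ {*}) × (X ⊔ {*}) → [0,∞] a symmetric function satisfying the triangle inequality d(x,z) ≤ d(x,y) + d(y,z) for all x, y, z ∈ X ⊔ {*}. For nonempty subsets S, S' ⊆ X define d̂(S,S') = inf over partial matchings 𝒫 between S and S' of sup_{(z,z') ∈ 𝒫} d(z,z'); also set d̂(S,{*}) = sup_{z∈S} d(z,*), d̂({*},S') = sup_{z'∈S'} d(*,z'), and d̂({*},{*}) = 0. Then for all S, S', S'' each either a nonempty subset of X or equal to {*}: d̂(S,S'') ≤ d̂(S,S') + d̂(S',S''). -/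
/-!
Encode `{*}` as the empty subset of `X`: a matching of `A` with `∅` has to send all of `A`
to `*`, so every case of `d̂` becomes the bottleneck matching distance between two subsets of `X`.
Matchings of `A` with `B` and of `B` with `C` compose to a matching of `A` with `C` by following
`a ↦ b ↦ c`, keeping `a ↦ *` and `* ↦ c` where a chain runs into `*`; by the triangle inequality
for `d`, the cost of the composite is at most the sum of the two costs.
-/

open Classical ENNReal

/-- A partial matching between the subsets `S ⊆ X` and `S' ⊆ X` (with `*` encoded by
`none`): a set of pairs in `((S ⊔ {*}) × (S' ⊔ {*})) ∖ {(*,*)}` such that every element of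
`S` occurs in exactly one pair and every element of `S'` occurs in exactly one pair. -/
def IsPartialMatchingOn {X : Type*} (S S' : Set X)
    (Q : Set (Option X × Option X)) : Prop :=
  ((none : Option X), (none : Option X)) ∉ Q ∧
  (∀ q ∈ Q, (∀ a ∈ q.1, a ∈ S) ∧ (∀ b ∈ q.2, b ∈ S')) ∧
  (∀ a ∈ S, ∃! t : Option X, (some a, t) ∈ Q) ∧
  (∀ b ∈ S', ∃! s : Option X, (s, some b) ∈ Q)

/-- The matching (pseudo)distance `d̂` between subsets of `X ⊔ {*}` which are either nonempty
subsets of `X` (encoded `some S`) or the singleton `{*}` (encoded `none`):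
`d̂(S,S')` is the infimum over partial matchings of the supremum of `d` over the matching,
`d̂(S,{*}) = sup_{z ∈ S} d(z,*)`, `d̂({*},{*}) = 0`. -/
noncomputable def dHat {X : Type*} (d : Option X → Option X → ℝ≥0∞) :
    Option (Set X) → Option (Set X) → ℝ≥0∞
  | some S, some S' =>
      ⨅ (Q : Set (Option X × Option X)) (_ : IsPartialMatchingOn S S' Q),
        ⨆ (q : Option X × Option X) (_ : q ∈ Q), d q.1 q.2
  | some S, none => ⨆ z ∈ S, d (some z) none
  | none, some S' => ⨆ z ∈ S', d none (some z)
  | none, none => 0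

section

variable {X : Type*}

theorem IsPartialMatchingOn.swap {A B : Set X} {Q : Set (Option X × Option X)}
    (h : IsPartialMatchingOn A B Q) : IsPartialMatchingOn B A (Prod.swap ⁻¹' Q) :=
  ⟨h.1, fun q hq => (h.2.1 q.swap hq).symm, h.2.2.2, h.2.2.1⟩

theorem isPartialMatchingOn_swap_iff {A B : Set X} {Q : Set (Option X × Option X)} :
    IsPartialMatchingOn B A (Prod.swap ⁻¹' Q) ↔ IsPartialMatchingOn A B Q :=
  ⟨fun h => h.swap, fun h => h.swap⟩

theorem isPartialMatchingOn_empty_right {A : Set X} {Q : Set (Option X × Option X)} :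
    IsPartialMatchingOn A ∅ Q ↔ Q = (fun a => (some a, none)) '' A := by
  constructor
  · rintro ⟨hnone, hmem, hA, -⟩
    have hsnd : ∀ q ∈ Q, q.2 = none := fun q hq =>
      Option.eq_none_iff_forall_not_mem.2 fun b hb => (hmem q hq).2 b hb
    ext ⟨s, t⟩
    constructor
    · intro hq
      obtain rfl : t = none := hsnd _ hq
      obtain _ | a := s
      · exact absurd hq hnone
      · exact ⟨a, (hmem _ hq).1 a rfl, rfl⟩
    · rintro ⟨a, ha, hq⟩
      obtain ⟨t', ht', -⟩ := hA a ha
      rwa [← hq, ← hsnd _ ht']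
  · rintro rfl
    refine ⟨by simp, ?_, fun a ha => ⟨none, by simpa using ha, by simp⟩, by simp⟩
    rintro _ ⟨a, ha, rfl⟩
    simpa using ha

theorem isPartialMatchingOn_empty_left {B : Set X} {Q : Set (Option X × Option X)} :
    IsPartialMatchingOn ∅ B Q ↔ Q = (fun b => (none, some b)) '' B := by
  rw [← isPartialMatchingOn_swap_iff, isPartialMatchingOn_empty_right,
    Set.preimage_eq_iff_eq_image Prod.swap_bijective, Set.image_image]
  rfl

/-- Matching through `*` is not transitive: `a ↦ *` and `* ↦ c` do not compose to `a ↦ c`. -/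
def matchingComp (Q₁ Q₂ : Set (Option X × Option X)) : Set (Option X × Option X) :=
  {p | p ≠ (none, none) ∧
    ((∃ b, (p.1, some b) ∈ Q₁ ∧ (some b, p.2) ∈ Q₂) ∨
      (p.2 = none ∧ (p.1, none) ∈ Q₁) ∨ (p.1 = none ∧ (none, p.2) ∈ Q₂))}

theorem matchingComp_swap (Q₁ Q₂ : Set (Option X × Option X)) :
    Prod.swap ⁻¹' matchingComp Q₁ Q₂ = matchingComp (Prod.swap ⁻¹' Q₂) (Prod.swap ⁻¹' Q₁) := by
  ext ⟨s, u⟩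
  simp only [matchingComp, Set.mem_preimage, Set.mem_ofPred_eq, Prod.swap_prod_mk, ne_eq,
    Prod.mk.injEq]
  aesop

namespace IsPartialMatchingOn

variable {A B C : Set X} {Q₁ Q₂ : Set (Option X × Option X)}

theorem mem_left_of_mem_matchingComp (h₁ : IsPartialMatchingOn A B Q₁)
    {s u : Option X} (hsu : (s, u) ∈ matchingComp Q₁ Q₂) : ∀ a ∈ s, a ∈ A := by
  intro a ha
  obtain ⟨-, ⟨b, hsb, -⟩ | ⟨-, hs⟩ | ⟨rfl, -⟩⟩ := hsu
  · exact (h₁.2.1 _ hsb).1 a ha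
  · exact (h₁.2.1 _ hs).1 a ha
  · cases ha

theorem existsUnique_mem_matchingComp (h₁ : IsPartialMatchingOn A B Q₁)
    (h₂ : IsPartialMatchingOn B C Q₂) {a : X} (ha : a ∈ A) :
    ∃! u, (some a, u) ∈ matchingComp Q₁ Q₂ := by
  obtain ⟨t, ht, ht_uniq⟩ := h₁.2.2.1 a ha
  cases t with
  | none =>
    refine ⟨none, ⟨by simp, .inr (.inl ⟨rfl, ht⟩)⟩, ?_⟩
    rintro u ⟨-, ⟨b, hb, -⟩ | ⟨rfl, -⟩ | ⟨h, -⟩⟩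
    · exact absurd (ht_uniq _ hb) (by simp)
    · rfl
    · cases h
  | some b =>
    obtain ⟨v, hv, hv_uniq⟩ := h₂.2.2.1 b ((h₁.2.1 _ ht).2 b rfl)
    refine ⟨v, ⟨by simp, .inl ⟨b, ht, hv⟩⟩, ?_⟩
    rintro u ⟨-, ⟨b', hb', hu⟩ | ⟨-, hu⟩ | ⟨h, -⟩⟩
    · obtain rfl : b' = b := Option.some_injective _ (ht_uniq _ hb')
      exact hv_uniq _ hu
    · exact absurd (ht_uniq _ hu) (by simp)
    · cases h

theorem comp (h₁ : IsPartialMatchingOn A B Q₁) (h₂ : IsPartialMatchingOn B C Q₂) :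
    IsPartialMatchingOn A C (matchingComp Q₁ Q₂) := by
  have swapped {q} (hq : q ∈ matchingComp Q₁ Q₂) :
      q.swap ∈ matchingComp (Prod.swap ⁻¹' Q₂) (Prod.swap ⁻¹' Q₁) := by
    rwa [← matchingComp_swap]
  refine ⟨fun h => h.1 rfl, fun q hq => ⟨h₁.mem_left_of_mem_matchingComp hq,
    h₂.swap.mem_left_of_mem_matchingComp (swapped hq)⟩, fun a ha =>
    h₁.existsUnique_mem_matchingComp h₂ ha, fun c hc => ?_⟩
  have := h₂.swap.existsUnique_mem_matchingComp h₁.swap hc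
  rwa [← matchingComp_swap] at this

end IsPartialMatchingOn

noncomputable def matchingCost (d : Option X → Option X → ℝ≥0∞)
    (Q : Set (Option X × Option X)) : ℝ≥0∞ :=
  ⨆ (q : Option X × Option X) (_ : q ∈ Q), d q.1 q.2

noncomputable def matchingDist (d : Option X → Option X → ℝ≥0∞) (A B : Set X) : ℝ≥0∞ :=
  ⨅ (Q : Set (Option X × Option X)) (_ : IsPartialMatchingOn A B Q), matchingCost d Q

variable {d : Option X → Option X → ℝ≥0∞}

theorem le_matchingCost {Q : Set (Option X × Option X)} {s t : Option X} (h : (s, t) ∈ Q) :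
    d s t ≤ matchingCost d Q :=
  le_iSup₂ (f := fun (q : Option X × Option X) (_ : q ∈ Q) => d q.1 q.2) (s, t) h

theorem matchingCost_matchingComp_le (htri : ∀ x y z, d x z ≤ d x y + d y z)
    (Q₁ Q₂ : Set (Option X × Option X)) :
    matchingCost d (matchingComp Q₁ Q₂) ≤ matchingCost d Q₁ + matchingCost d Q₂ := by
  refine iSup₂_le ?_
  rintro ⟨s, u⟩ ⟨-, ⟨b, hsb, hbu⟩ | ⟨rfl, hs⟩ | ⟨rfl, hu⟩⟩
  · exact (htri s (some b) u).trans (add_le_add (le_matchingCost hsb) (le_matchingCost hbu))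
  · exact le_add_right (le_matchingCost hs)
  · exact le_add_left (le_matchingCost hu)

theorem matchingDist_le_add (htri : ∀ x y z, d x z ≤ d x y + d y z) (A B C : Set X) :
    matchingDist d A C ≤ matchingDist d A B + matchingDist d B C :=
  ENNReal.le_iInf_add_iInf fun Q₁ Q₂ => ENNReal.le_iInf_add_iInf fun h₁ h₂ =>
    iInf₂_le_of_le _ (h₁.comp h₂) (matchingCost_matchingComp_le htri Q₁ Q₂)

theorem matchingDist_empty_right (A : Set X) :
    matchingDist d A ∅ = ⨆ a ∈ A, d (some a) none := by
  simp only [matchingDist, matchingCost, isPartialMatchingOn_empty_right, iInf_iInf_eq_left,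
    iSup_image]

theorem matchingDist_empty_left (B : Set X) :
    matchingDist d ∅ B = ⨆ b ∈ B, d none (some b) := by
  simp only [matchingDist, matchingCost, isPartialMatchingOn_empty_left, iInf_iInf_eq_left,
    iSup_image]

theorem dHat_eq_matchingDist (S T : Option (Set X)) :
    dHat d S T = matchingDist d (S.getD ∅) (T.getD ∅) := by
  rcases S with _ | A <;> rcases T with _ | B
  · simp [dHat, matchingDist_empty_right]
  · exact (matchingDist_empty_left B).symm
  · exact (matchingDist_empty_right A).symm
  · rfl

end

theorem statement11_general {X : Type*} (d : Option X → Option X → ℝ≥0∞)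
    (htri : ∀ x y z : Option X, d x z ≤ d x y + d y z)
    (S S' S'' : Option (Set X)) :
    dHat d S S'' ≤ dHat d S S' + dHat d S' S'' := by
  simp only [dHat_eq_matchingDist]
  exact matchingDist_le_add htri _ _ _

/-- if `d` is a symmetric `[0,∞]`-valued function on `X ⊔ {*}` satisfying the
triangle inequality, then `d̂` satisfies the triangle inequality on the collection of all
nonempty subsets of `X` together with `{*}`. -/
theorem statement11 {X : Type*} (d : Option X → Option X → ℝ≥0∞)
    (hsymm : ∀ x y : Option X, d x y = d y x)
    (htri : ∀ x y z : Option X, d x z ≤ d x y + d y z)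
    (S S' S'' : Option (Set X))
    (hS : ∀ T ∈ S, T.Nonempty) (hS' : ∀ T ∈ S', T.Nonempty) (hS'' : ∀ T ∈ S'', T.Nonempty) :
    dHat d S S'' ≤ dHat d S S' + dHat d S' S'' :=
  statement11_general d htri S S' S''
end

section
/- Let k be a field, (P, ⪯) a totally ordered set, and K = ⊕_{a∈A} k_{I_a} a direct sum of interval modules in which every interval I_a is unbounded below. Let f : K → N be a morphism of persistence modules such that for every p ∈ P there exists p' ⪯ p with f(p') : K(p') → N(p') injective. Then f(p) is injective for every p ∈ P. -/
/-!
Every `I_a` is downward closed, so the structure maps `K(p) → K(p')` of `K` are injective.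
Naturality gives `f(p') ∘ K(p ≥ p') = N(p ≥ p') ∘ f(p)`, and the left side is injective when
`f(p')` is, hence so is `f(p)`.
-/

set_option linter.unusedSectionVars false

open Classical

universe u v w w'

/-- An interval is bounded below if some point of `P` outside it lies strictly below a point
of it. -/
def BddBelowInterval (P : Type v) [LinearOrder P] (I : Set P) : Prop :=
  ∃ p ∉ I, ∃ p' ∈ I, p < p'

theorem isLowerSet_of_not_bddBelowInterval {P : Type v} [LinearOrder P] {I : Set P}
    (hI : ¬ BddBelowInterval P I) : IsLowerSet I := by
  intro q q' hle hq
  by_contra hq'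
  exact hI ⟨q', hq', q, hq, lt_of_le_of_ne hle (ne_of_mem_of_not_mem hq hq').symm⟩

theorem intervalMapAux_injective (k : Type u) [Field k] {P : Type v} [LinearOrder P]
    {I : Set P} {p p' : P} (h : p ∈ I → p' ∈ I) :
    Function.Injective (intervalMapAux k P I p p') := by
  intro x y hxy
  by_cases hp : p ∈ I
  · have hval := congrArg Subtype.val hxy
    simp only [intervalMapAux, LinearMap.coe_mk, AddHom.coe_mk, if_pos (h hp)] at hval
    exact Subtype.ext hval
  · exact Subtype.ext ((intervalCarrier_eq_zero k P hp x).trans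
      (intervalCarrier_eq_zero k P hp y).symm)

theorem directSumPM_map_injective {k : Type u} [Field k] {P : Type v} [LinearOrder P]
    {A : Type w'} {Ms : A → PersistenceModule.{u,v,w} k P} {p p' : P} (hle : p' ≤ p)
    (h : ∀ a, Function.Injective ((Ms a).map hle)) :
    Function.Injective ((directSumPM k P Ms).map hle) :=
  (DFinsupp.mapRange_injective (fun a => (Ms a).map hle) fun _ => map_zero _).2 h

theorem PersistenceHom.injective_of_le {k : Type u} [Field k] {P : Type v} [LinearOrder P]
    {M : PersistenceModule.{u,v,w} k P} {N : PersistenceModule.{u,v,w'} k P}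
    (f : PersistenceHom M N) {p p' : P} (hle : p' ≤ p) (hM : Function.Injective (M.map hle))
    (hf : Function.Injective (f.f p')) : Function.Injective (f.f p) := by
  have hcomp : Function.Injective ((f.f p').comp (M.map hle)) := hf.comp hM
  rw [← f.comm hle, LinearMap.coe_comp] at hcomp
  exact hcomp.of_comp

/-- let `K = ⊕_{a} k_{I_a}` with every `I_a` unbounded below, and let
`f : K → N` be a morphism of persistence modules such that for every `p` there is some
`p' ⪯ p` with `f(p')` injective.  Then `f(p)` is injective for every `p`. -/
theorem statement13 (k : Type u) [Field k] (P : Type v) [LinearOrder P]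
    {A : Type w'} (I : A → Set P) (hI : ∀ a, IsInterval P (I a))
    (hub : ∀ a, ¬ BddBelowInterval P (I a))
    (N : PersistenceModule.{u,v,w} k P)
    (f : PersistenceHom (directSumPM k P (fun a => intervalModule k P (I a) (hI a))) N)
    (hinj : ∀ p : P, ∃ p', p' ≤ p ∧ Function.Injective (f.f p')) :
    ∀ p : P, Function.Injective (f.f p) := by
  intro p
  obtain ⟨p', hle, hp'⟩ := hinj p
  refine f.injective_of_le hle (directSumPM_map_injective hle fun a => ?_) hp'
  exact intervalMapAux_injective k fun hp => isLowerSet_of_not_bddBelowInterval (hub a) hle hp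
end
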